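/- Let B be an H-module algebra with action ▷, and A an ideal of B with a system of local units S = {e_λ}. Suppose for every h ∈ H and a ∈ A there exist subsystems of local units L(h,a) and R(h,a) of S such that e(h▷a) = (h▷a)f for all e ∈ L(h,a), f ∈ R(h,a). Then h ⇀ a := e(h▷a), for any e ∈ L(h,a), is well-defined and determines a partial action of H on A. -/

import Mathlib

/-! An element `y` of `A` is determined by its left multiples `a' * y`, `a' ∈ A`: a local unit `u`
for `y` gives `y = u * y`. For `e ∈ L(h,a)` and `a' ∈ A`, choosing `f ∈ R(h,a)` with
`a' (h ▷ a) f = a' (h ▷ a)` gives `a' (e (h ▷ a)) = a' (h ▷ a) f = a' (h ▷ a)`. So `h ⇀ a` is the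
unique element of `A` with the same left `A`-multiples as `h ▷ a`, independently of `e`, and its
bilinearity and the partial action axioms reduce to identities between left `A`-multiples, which
follow from the module algebra axioms of `▷` because `A` is a right ideal. -/

open TensorProduct

section PartialHopfPrelude

variable (k : Type) [Field k] (H : Type) [Ring H] [HopfAlgebra k H]

/-- Sweedler-style sum `Σ f h₁ h₂` over the comultiplication of `h`. -/
noncomputable def sweedler {M : Type} [AddCommGroup M] [Module k M]
    (f : H →ₗ[k] H →ₗ[k] M) (h : H) : M :=
  TensorProduct.lift f (Coalgebra.comul h)

variable {A : Type} [AddCommGroup A] [Module k A]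

/-- `Σ (h₁ · a) * (h₂ g · b)`, with an explicit multiplication `mA` on `A`. -/
noncomputable def paRhs (mA : A →ₗ[k] A →ₗ[k] A) (act : H →ₗ[k] A →ₗ[k] A)
    (h g : H) (a b : A) : A :=
  sweedler k H ((mA.comp (act.flip a)).compl₂ ((act.flip b).comp (LinearMap.mulRight k g))) h

/-- `Σ (h₁ g · b) * (h₂ · a)`, with an explicit multiplication `mA` on `A`. -/
noncomputable def paSymmRhs (mA : A →ₗ[k] A →ₗ[k] A) (act : H →ₗ[k] A →ₗ[k] A)
    (h g : H) (a b : A) : A :=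
  sweedler k H ((mA.comp ((act.flip b).comp (LinearMap.mulRight k g))).compl₂ (act.flip a)) h

/-- A (left) partial action of the Hopf algebra `H` on `A`, where the (possibly nonunital,
possibly nonassociative) multiplication of `A` is given explicitly as a bilinear map `mA`:
`1_H · a = a` and `h · (a (g · b)) = Σ (h₁ · a)(h₂ g · b)`. -/
structure IsPartialActionOn (mA : A →ₗ[k] A →ₗ[k] A) (act : H →ₗ[k] A →ₗ[k] A) : Prop where
  one_act : ∀ a : A, act 1 a = a
  act_assoc : ∀ (h g : H) (a b : A), act h (mA a (act g b)) = paRhs k H mA act h g a b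

/-- A symmetrical partial action: additionally `h · ((g · b) a) = Σ (h₁ g · b)(h₂ · a)`. -/
structure IsSymmPartialActionOn (mA : A →ₗ[k] A →ₗ[k] A) (act : H →ₗ[k] A →ₗ[k] A)
    extends IsPartialActionOn k H mA act : Prop where
  act_symm : ∀ (h g : H) (a b : A), act h (mA (act g b) a) = paSymmRhs k H mA act h g a b

variable {B : Type} [NonUnitalRing B] [Module k B] [SMulCommClass k B B] [IsScalarTower k B B]

/-- A partial action of `H` on the nonunital algebra `B` (with its own multiplication). -/
def IsPartialAction (act : H →ₗ[k] B →ₗ[k] B) : Prop :=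
  IsPartialActionOn k H (LinearMap.mul k B) act

/-- A symmetrical partial action of `H` on the nonunital algebra `B`. -/
def IsSymmPartialAction (act : H →ₗ[k] B →ₗ[k] B) : Prop :=
  IsSymmPartialActionOn k H (LinearMap.mul k B) act

end PartialHopfPrelude

section ModuleAlgebraPrelude

variable (k : Type) [Field k] (H : Type) [Ring H] [HopfAlgebra k H]
variable {B : Type} [NonUnitalRing B] [Module k B] [SMulCommClass k B B] [IsScalarTower k B B]

/-- `B` is an `H`-module algebra (possibly nonunital) for the global action `gact`:
`1 ▷ b = b`, `h ▷ (b c) = Σ (h₁ ▷ b)(h₂ ▷ c)` and `h ▷ (g ▷ b) = (h g) ▷ b`. -/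
structure IsModuleAlgebra (gact : H →ₗ[k] B →ₗ[k] B) : Prop where
  one_act : ∀ b : B, gact 1 b = b
  act_mul : ∀ (h : H) (b c : B),
    gact h (b * c) =
      sweedler k H (((LinearMap.mul k B).comp (gact.flip b)).compl₂ (gact.flip c)) h
  act_act : ∀ (h g : H) (b : B), gact h (gact g b) = gact (h * g) b

end ModuleAlgebraPrelude

section Stmt14

variable {k : Type} [Field k] {H : Type} [Ring H] [HopfAlgebra k H]
variable {B : Type} [NonUnitalRing B] [Module k B] [SMulCommClass k B B] [IsScalarTower k B B]

/-- `S` is a system of local units for the subset `Acar` of `B`: it consists of idempotents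
of `Acar`, and every finite subset of `Acar` admits an element of `S` acting as a two-sided
identity on it. -/
def IsSLUFor (Acar : Set B) (S : Set B) : Prop :=
  S ⊆ Acar ∧ (∀ e ∈ S, e * e = e) ∧
    ∀ F : Finset B, ↑F ⊆ Acar → ∃ e ∈ S, ∀ a ∈ F, e * a = a ∧ a * e = a

end Stmt14

theorem sweedler_eq_sum {k : Type} [Field k] {H : Type} [Ring H] [HopfAlgebra k H] {M : Type}
    [AddCommGroup M] [Module k M] (f : H →ₗ[k] H →ₗ[k] M) {h : H} {ι : Type}
    (𝓡 : Coalgebra.Repr k h ι) :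
    sweedler k H f h = ∑ i ∈ 𝓡.index, f (𝓡.left i) (𝓡.right i) := by
  simp [sweedler, ← 𝓡.eq]

namespace IsSLUFor

variable {B : Type} [NonUnitalRing B] {A S : Set B}

theorem nonempty (hS : IsSLUFor A S) : S.Nonempty :=
  let ⟨e, he, _⟩ := hS.2.2 ∅ (by simp)
  ⟨e, he⟩

theorem exists_unit (hS : IsSLUFor A S) {y : B} (hy : y ∈ A) : ∃ e ∈ S, e * y = y ∧ y * e = y :=
  let ⟨e, he, hunit⟩ := hS.2.2 {y} (by simpa using hy)
  ⟨e, he, hunit y (Finset.mem_singleton_self y)⟩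

theorem eq_of_forall_mul_eq (hS : IsSLUFor A S) {y₁ y₂ : B} (h₁ : y₁ ∈ A) (h₂ : y₂ ∈ A)
    (h : ∀ a ∈ A, a * y₁ = a * y₂) : y₁ = y₂ := by
  classical
  obtain ⟨u, hu, hunit⟩ := hS.2.2 {y₁, y₂} (by simp [Set.insert_subset_iff, h₁, h₂])
  calc y₁ = u * y₁ := (hunit y₁ (by simp)).1.symm
    _ = u * y₂ := h u (hS.1 hu)
    _ = y₂ := (hunit y₂ (by simp)).1

theorem mul_mul_eq_mul (hS : IsSLUFor A S) {e x a : B} (hex : ∀ f ∈ S, e * x = x * f)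
    (hax : a * x ∈ A) : a * (e * x) = a * x := by
  obtain ⟨f, hf, -, hunit⟩ := hS.exists_unit hax
  rw [hex f hf, ← mul_assoc, hunit]

end IsSLUFor

theorem IsSLUFor.exists_bilinear_forall_mul_eq {k B : Type} [Field k] [NonUnitalRing B]
    [Module k B] [SMulCommClass k B B] {M N : Type} [AddCommGroup M] [Module k M]
    [AddCommGroup N] [Module k N] {A : NonUnitalSubalgebra k B} {S : Set B}
    (hS : IsSLUFor (A : Set B) S) (F : M →ₗ[k] N →ₗ[k] B)
    (hF : ∀ m n, ∃ y ∈ A, ∀ a ∈ A, a * y = a * F m n) :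
    ∃ G : M →ₗ[k] N →ₗ[k] A, ∀ m n, ∀ a ∈ A, a * (G m n : B) = a * F m n := by
  let mulLeftA : B →ₗ[k] A → B := LinearMap.pi fun a => LinearMap.mulLeft k (a : B)
  have hinj : Function.Injective (mulLeftA ∘ₗ A.toSubmodule.subtype) := fun y₁ y₂ h =>
    Subtype.ext <| hS.eq_of_forall_mul_eq y₁.2 y₂.2 fun a ha => congrFun h ⟨a, ha⟩
  have hrange : ∀ m n, F.compr₂ mulLeftA m n ∈ (mulLeftA ∘ₗ A.toSubmodule.subtype).range := by
    intro m n
    obtain ⟨y, hy, hya⟩ := hF m n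
    exact ⟨⟨y, hy⟩, funext fun a => hya a a.2⟩
  refine ⟨(F.compr₂ mulLeftA).codRestrict₂ _ hinj hrange, fun m n a ha => ?_⟩
  exact congrFun (LinearMap.codRestrict₂_apply _ _ hinj hrange m n) ⟨a, ha⟩

section Stmt14

variable {k : Type} [Field k] {H : Type} [Ring H] [HopfAlgebra k H]
variable {B : Type} [NonUnitalRing B] [Module k B] [SMulCommClass k B B] [IsScalarTower k B B]

theorem isPartialAction_of_forall_mul_eq {gact : H →ₗ[k] B →ₗ[k] B}
    (hma : IsModuleAlgebra k H gact) {A : NonUnitalSubalgebra k B} (hA : ∀ a ∈ A, ∀ b, a * b ∈ A)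
    {S : Set B} (hS : IsSLUFor (A : Set B) S) (pact : H →ₗ[k] A →ₗ[k] A)
    (hpact : ∀ h (a : A), ∀ a' ∈ A, a' * (pact h a : B) = a' * gact h a) :
    IsPartialAction k H pact := by
  refine ⟨fun a => Subtype.ext ?_, fun h g a b => Subtype.ext ?_⟩
  · refine hS.eq_of_forall_mul_eq (pact 1 a).2 a.2 fun a' ha' => ?_
    rw [hpact _ _ _ ha', hma.one_act]
  · refine hS.eq_of_forall_mul_eq (pact _ _).2 (paRhs k H (LinearMap.mul k A) pact h g a b).2
      fun a' ha' => ?_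
    let 𝓡 := Coalgebra.Repr.arbitrary k h
    have hab : (a : B) * pact g b = a * gact g b := hpact g b a a.2
    calc a' * (pact h (a * pact g b) : B) = a' * gact h (a * gact g b) := by
          rw [hpact _ _ _ ha', NonUnitalSubalgebra.coe_mul, hab]
      _ = ∑ i ∈ 𝓡.index, a' * gact (𝓡.left i) a * gact (𝓡.right i * g) b := by
          simp [hma.act_mul, sweedler_eq_sum _ 𝓡, Finset.mul_sum, hma.act_act, mul_assoc]
      _ = ∑ i ∈ 𝓡.index, a' * (pact (𝓡.left i) a * pact (𝓡.right i * g) b : B) := by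
          refine Finset.sum_congr rfl fun i _ => ?_
          rw [← mul_assoc, hpact _ _ _ ha', hpact _ _ _ (hA a' ha' _)]
      _ = a' * ((paRhs k H (LinearMap.mul k A) pact h g a b : A) : B) := by
          simp [paRhs, sweedler_eq_sum _ 𝓡, Finset.mul_sum]

/-- Let `B` be an `H`-module algebra with action `▷`, and `A` an ideal of
`B` with a system of local units `S`.  If for every `h ∈ H` and `a ∈ A` there are subsystems
of local units `L(h,a)` and `R(h,a)` of `S` with `e (h ▷ a) = (h ▷ a) f` for all
`e ∈ L(h,a)`, `f ∈ R(h,a)`, then `h ⇀ a := e (h ▷ a)` (for any `e ∈ L(h,a)`) is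
well-defined and is a partial action of `H` on `A`. -/
theorem local_units_induce_partial_action
    (gact : H →ₗ[k] B →ₗ[k] B) (hma : IsModuleAlgebra k H gact)
    (A : NonUnitalSubalgebra k B)
    (hIdl : ∀ (b : B) (x : B), x ∈ A → b * x ∈ A ∧ x * b ∈ A)
    (S : Set B) (hS : IsSLUFor (A : Set B) S)
    (hLR : ∀ (h : H), ∀ a ∈ A, ∃ L R : Set B,
      L ⊆ S ∧ R ⊆ S ∧ IsSLUFor (A : Set B) L ∧ IsSLUFor (A : Set B) R ∧
      ∀ e ∈ L, ∀ f ∈ R, e * gact h a = gact h a * f) :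
    ∃ pact : H →ₗ[k] ↥A →ₗ[k] ↥A,
      (∀ (h : H) (a : ↥A) (L R : Set B),
        L ⊆ S → R ⊆ S → IsSLUFor (A : Set B) L → IsSLUFor (A : Set B) R →
        (∀ e ∈ L, ∀ f ∈ R, e * gact h (a : B) = gact h (a : B) * f) →
        ∀ e ∈ L, (pact h a : B) = e * gact h (a : B)) ∧
      IsPartialAction k H pact := by
  have hA : ∀ a ∈ A, ∀ b, a * b ∈ A := fun a ha b => (hIdl b a ha).2
  obtain ⟨pact, hpact⟩ := hS.exists_bilinear_forall_mul_eq (gact.compl₂ A.toSubmodule.subtype)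
    fun h a => by
      obtain ⟨L, R, -, -, hL, hR, hcomm⟩ := hLR h a a.2
      obtain ⟨e, he⟩ := hL.nonempty
      exact ⟨e * gact h a, hA e (hL.1 he) _, fun a' ha' =>
        hR.mul_mul_eq_mul (hcomm e he) (hA a' ha' _)⟩
  refine ⟨pact, fun h a L R _ _ hL hR hcomm e he => ?_,
    isPartialAction_of_forall_mul_eq hma hA hS pact hpact⟩
  exact hS.eq_of_forall_mul_eq (pact h a).2 (hA e (hL.1 he) _) fun a' ha' =>
    (hpact h a a' ha').trans (hR.mul_mul_eq_mul (hcomm e he) (hA a' ha' _)).symm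

end Stmt14
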